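/- For y₂ ≥ y₁ + 2β with y₁ large, constants m₁, m₂ > 0, c > 0, N ≥ 2, a > 0, and α ≥ 1 satisfying α·(e^{2y₂} - 2e^{2c})^{N/2}·m₂^{N/2} ≥ α_{big}, one has the comparison: (2a^{N/2}/N)·(m₂(e^{2y₂} - 2e^{2c} + e^{4c-2y₂}))^{N/2}·(2/α) ≥ (2a^{N/2}/N)·(m₁(e^{2y₁} + 2e^{2c} + e^{4c-2y₁}))^{N/2} + 2e^{Nα} for all sufficiently large y₁ (depending on m₁, m₂, c, N, a, α, β with β ≥ α). -/
import Mathlib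
set_option maxHeartbeats 1000000


open Real

/-- Quantitative heart of the angle lemma: for fixed `N ≥ 2` and constants
`a, c, m₁, m₂ > 0`, there is a threshold `B₀` such that whenever `β ≥ B₀`,
`1 ≤ α ≤ β ≤ y₁` and `y₂ ≥ y₁ + 2β`, the `N/2`-power growth dominates:
`(2a^{N/2}/N)(m₂(e^{2y₂} - 2e^{2c} + e^{4c-2y₂}))^{N/2}(2/α)
  ≥ (2a^{N/2}/N)(m₁(e^{2y₁} + 2e^{2c} + e^{4c-2y₁}))^{N/2} + 2e^{Nα}`. -/
theorem angle_lemma_quantitative (N : ℕ) (hN : 2 ≤ N) (a c m₁ m₂ : ℝ)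
    (ha : 0 < a) (hc : 0 < c) (hm₁ : 0 < m₁) (hm₂ : 0 < m₂) :
    ∃ B₀ : ℝ, ∀ β α y₁ y₂ : ℝ, B₀ ≤ β → 1 ≤ α → α ≤ β → β ≤ y₁ →
      y₁ + 2 * β ≤ y₂ →
      (2 * a ^ ((N : ℝ) / 2) / N) *
          (m₁ * (exp (2 * y₁) + 2 * exp (2 * c) + exp (4 * c - 2 * y₁))) ^ ((N : ℝ) / 2)
          + 2 * exp (N * α)
        ≤ (2 * a ^ ((N : ℝ) / 2) / N) *
            (m₂ * (exp (2 * y₂) - 2 * exp (2 * c) + exp (4 * c - 2 * y₂))) ^ ((N : ℝ) / 2)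
            * (2 / α) := by
  have hN2 : (2 : ℝ) ≤ (N : ℝ) := by exact_mod_cast hN
  have hNpos : (0 : ℝ) < (N : ℝ) := by linarith
  set n : ℝ := (N : ℝ) / 2 with hn_def
  have hn : 0 < n := by positivity
  set C : ℝ := 2 * a ^ n / N with hC_def
  have hC : 0 < C := by positivity
  set K : ℝ := (C * (2 * m₁) ^ n + 2) / (C * (m₂ / 2) ^ n) with hK_def
  have hden : 0 < C * (m₂ / 2) ^ n := by positivity
  have hK : 0 < K := by positivity
  refine ⟨max (max 1 (2 * c + 2)) (Real.log K), fun β α y₁ y₂ hB hα hαβ hβy₁ hy₂ => ?_⟩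
  have hβ1 : (1 : ℝ) ≤ β := le_trans (le_trans (le_max_left _ _) (le_max_left _ _)) hB
  have hβc : 2 * c + 2 ≤ β := le_trans (le_trans (le_max_right _ _) (le_max_left _ _)) hB
  have hβK : Real.log K ≤ β := le_trans (le_max_right _ _) hB
  have hαpos : (0 : ℝ) < α := lt_of_lt_of_le one_pos hα
  have hy₁c : 2 * c + 2 ≤ y₁ := le_trans hβc hβy₁
  have hy₂c : 2 * c + 2 ≤ y₂ := by nlinarith
  -- exponential bounds
  have he1 : exp (4 * c - 2 * y₁) ≤ exp (4 * c) := by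
    apply exp_le_exp.mpr; nlinarith
  have he2 : exp (2 * c) ≤ exp (4 * c) := by
    apply exp_le_exp.mpr; nlinarith
  have he3 : exp (4 * c + 2) ≤ exp (2 * y₁) := by
    apply exp_le_exp.mpr; nlinarith
  have hexp2 : (Real.exp 1) ^ (2:ℕ) ≤ exp (2 : ℝ) := by
    rw [← Real.exp_nat_mul]; norm_num
  have he_two : (3 : ℝ) ≤ exp (2 : ℝ) := by
    nlinarith [Real.add_one_le_exp (1 : ℝ), Real.exp_pos (1 : ℝ)]
  have hexp_add : exp (4 * c + 2) = exp (4 * c) * exp (2 : ℝ) := by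
    rw [← Real.exp_add]
  -- inner term bound for y₁ side
  have hinner1 : exp (2 * y₁) + 2 * exp (2 * c) + exp (4 * c - 2 * y₁)
      ≤ 2 * exp (2 * y₁) := by
    have h5 : 3 * exp (4 * c) ≤ exp (4 * c) * exp (2 : ℝ) := by
      nlinarith [Real.exp_pos (4 * c), he_two]
    linarith [he1, he2, h5, hexp_add, he3]
  -- inner term bound for y₂ side
  have he4 : exp (4 * c + 4) ≤ exp (2 * y₂) := by
    apply exp_le_exp.mpr; nlinarith
  have he5 : (4 : ℝ) * exp (2 * c) ≤ exp (4 * c + 4) := by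
    have : exp (4 * c + 4) = exp (2 * c) * exp (2 * c + 4) := by
      rw [← Real.exp_add]; ring_nf
    rw [this]
    have h4 : (4 : ℝ) ≤ exp (2 * c + 4) := by
      have := Real.add_one_le_exp (2 * c + 4)
      linarith
    nlinarith [Real.exp_pos (2 * c)]
  have hinner2 : m₂ / 2 * exp (2 * y₂)
      ≤ m₂ * (exp (2 * y₂) - 2 * exp (2 * c) + exp (4 * c - 2 * y₂)) := by
    nlinarith [Real.exp_pos (4 * c - 2 * y₂), he4, he5]
  -- rpow bounds
  have hpow_exp : ∀ t : ℝ, (exp (2 * t)) ^ n = exp ((N : ℝ) * t) := by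
    intro t
    rw [← Real.exp_mul]
    congr 1
    rw [hn_def]; ring
  have hA1 : (m₁ * (exp (2 * y₁) + 2 * exp (2 * c) + exp (4 * c - 2 * y₁))) ^ n
      ≤ (2 * m₁) ^ n * exp ((N : ℝ) * y₁) := by
    rw [← hpow_exp y₁, ← Real.mul_rpow (by positivity) (by positivity)]
    apply Real.rpow_le_rpow (by positivity) _ hn.le
    have := mul_le_mul_of_nonneg_left hinner1 hm₁.le
    linarith
  have hA2 : (m₂ / 2) ^ n * exp ((N : ℝ) * y₂)
      ≤ (m₂ * (exp (2 * y₂) - 2 * exp (2 * c) + exp (4 * c - 2 * y₂))) ^ n := by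
    rw [← hpow_exp y₂, ← Real.mul_rpow (by positivity) (by positivity)]
    apply Real.rpow_le_rpow (by positivity) hinner2 hn.le
  -- exponent comparison: α ≤ y₁
  have hαy₁ : α ≤ y₁ := le_trans hαβ hβy₁
  have heα : exp ((N : ℝ) * α) ≤ exp ((N : ℝ) * y₁) := by
    apply exp_le_exp.mpr
    linarith [mul_le_mul_of_nonneg_left hαy₁ hNpos.le]
  -- key : K * exp(N y₁) ≤ exp(N y₂) * (2/α)
  have hKβ : K ≤ exp β := by
    calc K = exp (Real.log K) := (Real.exp_log hK).symm
    _ ≤ exp β := exp_le_exp.mpr hβK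
  have hβexp : β ≤ exp β := by nlinarith [Real.add_one_le_exp β]
  have hkey : K * exp ((N : ℝ) * y₁) ≤ exp ((N : ℝ) * y₂) * (2 / α) := by
    have hαexp : α * exp β ≤ exp β * exp β :=
      mul_le_mul_of_nonneg_right (le_trans hαβ hβexp) (Real.exp_pos β).le
    have hee : exp β * exp β = exp (2 * β) := by rw [← Real.exp_add]; ring_nf
    have h2b : exp (2 * β) ≤ exp (2 * (N : ℝ) * β) := by
      apply exp_le_exp.mpr
      linarith [mul_le_mul_of_nonneg_right hN2 (by linarith : (0:ℝ) ≤ β)]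
    have h1 : α * exp β ≤ 2 * exp (2 * (N : ℝ) * β) := by
      linarith [hαexp, h2b, Real.exp_pos (2 * (N:ℝ) * β)]
    have h3 : exp (2 * (N:ℝ) * β) * exp ((N:ℝ) * y₁) ≤ exp ((N:ℝ) * y₂) := by
      rw [← Real.exp_add]
      apply exp_le_exp.mpr
      linarith [mul_le_mul_of_nonneg_left hy₂ hNpos.le]
    have h1' : α * exp β * exp ((N:ℝ) * y₁)
        ≤ 2 * exp (2 * (N:ℝ) * β) * exp ((N:ℝ) * y₁) :=
      mul_le_mul_of_nonneg_right h1 (Real.exp_pos _).le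
    have h2 : exp β * exp ((N:ℝ) * y₁) * α ≤ exp ((N:ℝ) * y₂) * 2 := by
      linarith [h1', h3]
    have hK' : K * exp ((N:ℝ) * y₁) * α ≤ exp β * exp ((N:ℝ) * y₁) * α := by
      have := mul_le_mul_of_nonneg_right hKβ
        (show (0:ℝ) ≤ exp ((N:ℝ) * y₁) * α by positivity)
      linarith [this]
    have hgoal : K * exp ((N:ℝ) * y₁) ≤ exp ((N:ℝ) * y₂) * 2 / α := by
      rw [le_div_iff₀ hαpos]
      linarith
    calc K * exp ((N:ℝ) * y₁) ≤ exp ((N:ℝ) * y₂) * 2 / α := hgoal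
      _ = exp ((N:ℝ) * y₂) * (2 / α) := by ring
  -- put it all together
  have hKeq : C * (2 * m₁) ^ n + 2 = K * (C * (m₂ / 2) ^ n) := by
    rw [hK_def, div_mul_cancel₀ _ hden.ne']
  calc C * (m₁ * (exp (2 * y₁) + 2 * exp (2 * c) + exp (4 * c - 2 * y₁))) ^ n
        + 2 * exp ((N : ℝ) * α)
      ≤ C * ((2 * m₁) ^ n * exp ((N : ℝ) * y₁)) + 2 * exp ((N : ℝ) * y₁) := by
        gcongr
    _ = (C * (2 * m₁) ^ n + 2) * exp ((N : ℝ) * y₁) := by ring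
    _ = (C * (m₂ / 2) ^ n) * (K * exp ((N : ℝ) * y₁)) := by rw [hKeq]; ring
    _ ≤ (C * (m₂ / 2) ^ n) * (exp ((N : ℝ) * y₂) * (2 / α)) := by gcongr
    _ = C * ((m₂ / 2) ^ n * exp ((N : ℝ) * y₂)) * (2 / α) := by ring
    _ ≤ C * (m₂ * (exp (2 * y₂) - 2 * exp (2 * c) + exp (4 * c - 2 * y₂))) ^ n * (2 / α) := by
        gcongr
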